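/- arXiv:1908.03172 — 3 statements merged into one kernel-verified Lean document; each statement's English description precedes it below -/
import Mathlib

section
/- Let G be a finite simple graph that is not (3,4)-colorable, let v be a vertex of G with deg(v) ∈ {6, 7, 8}, and let c be a (3,4)-coloring of G − v. Then v has a neighbor u in G such that u is saturated under c and u is either a vertex of degree at least 9, or a vertex of degree at least 5 with at least two 3^+-neighbors. -/
/-- The degree of a vertex: the number of its neighbors. -/
noncomputable def degN {V : Type*} (G : SimpleGraph V) (v : V) : ℕ :=
  {w | G.Adj v w}.ncard

/-- `c` is a (3,4)-coloring of `G`: every vertex gets value 3 or 4, and every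
vertex with value `i` has at most `i` neighbors with value `i`. -/
def IsColoring34 {V : Type*} (G : SimpleGraph V) (c : V → ℕ) : Prop :=
  (∀ v, c v = 3 ∨ c v = 4) ∧ ∀ v, {w | G.Adj v w ∧ c w = c v}.ncard ≤ c v

/-- `G` is (3,4)-colorable. -/
def Colorable34 {V : Type*} (G : SimpleGraph V) : Prop :=
  ∃ c, IsColoring34 G c

/-- The graph `G − v` obtained by deleting the vertex `v` and its incident edges
(keeping `v` as an isolated vertex, which does not affect (3,4)-colorability). -/
def deleteVert {V : Type*} (G : SimpleGraph V) (v : V) : SimpleGraph V where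
  Adj a b := G.Adj a b ∧ a ≠ v ∧ b ≠ v
  symm := ⟨fun _ _ ⟨h, ha, hb⟩ => ⟨h.symm, hb, ha⟩⟩
  loopless := ⟨fun a ⟨h, _, _⟩ => G.loopless.irrefl a h⟩

/-- `G` is minimally non-(3,4)-colorable. -/
def MinNonColorable34 {V : Type*} (G : SimpleGraph V) : Prop :=
  ¬ Colorable34 G ∧ (∀ v, Colorable34 (deleteVert G v)) ∧
    ∀ e ∈ G.edgeSet, Colorable34 (G.deleteEdges {e})

/-- `u` is `i`-saturated under the coloring `c` of the graph `G`. -/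
def Saturated34 {V : Type*} (G : SimpleGraph V) (c : V → ℕ) (i : ℕ) (u : V) : Prop :=
  c u = i ∧ {w | G.Adj u w ∧ c w = i}.ncard = i

/-- `u` can be recolored: changing the color of `u` to the other color
(`7 - c u` swaps 3 and 4) again yields a (3,4)-coloring of `G`. -/
def Recolorable34 {V : Type*} [DecidableEq V] (G : SimpleGraph V) (c : V → ℕ) (u : V) : Prop :=
  IsColoring34 G (Function.update c u (7 - c u))

/-- The number of 3^+-neighbors of `x` in `G` (neighbors of degree at least 3). -/
noncomputable def tpn {V : Type*} (G : SimpleGraph V) (x : V) : ℕ :=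
  {w | G.Adj x w ∧ 3 ≤ degN G w}.ncard

/-- A 5p-vertex (poor 5-vertex): degree 5 with exactly one 3^+-neighbor. -/
def Is5p {V : Type*} (G : SimpleGraph V) (x : V) : Prop := degN G x = 5 ∧ tpn G x = 1

/-- A 5s-vertex (semi-poor 5-vertex): degree 5 with exactly two 3^+-neighbors. -/
def Is5s {V : Type*} (G : SimpleGraph V) (x : V) : Prop := degN G x = 5 ∧ tpn G x = 2

/-- A 6p-vertex (poor 6-vertex): degree 6 with exactly one 3^+-neighbor. -/
def Is6p {V : Type*} (G : SimpleGraph V) (x : V) : Prop := degN G x = 6 ∧ tpn G x = 1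

/-- `G` has girth at least 5: no 3-cycles and no 4-cycles. -/
def GirthAtLeast5 {V : Type*} (G : SimpleGraph V) : Prop :=
  (∀ a b c : V, G.Adj a b → G.Adj b c → ¬ G.Adj c a) ∧
  (∀ a b c d : V, a ≠ c → b ≠ d →
    G.Adj a b → G.Adj b c → G.Adj c d → ¬ G.Adj d a)

/-! Color `v` with a color `i` that at most `i` of its neighbors carry (one exists since
`deg v ≤ 8`). This only fails at an `i`-saturated neighbor `u`. If `u` has degree at
most 8 and is poor (degree at most 4, or at most one 3⁺-neighbor), then `u` can switch to the
other color `7 - i`: it has at most `7 - i` neighbors of that color in `G − v`, and a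
`(7 - i)`-saturated neighbor `x` of `u` would have degree at least 3, so that `v` and `x` are two
3⁺-neighbors of `u`, forcing `deg u ≤ 4`, which leaves no room for `x` beside the `i ≥ 3`
neighbors of color `i`. Switching removes `u` from the `i`-colored neighbors of `v` and creates
no new `i`-saturated vertex, so iterating colors `G`. -/

open Function Set

section Colorable34

variable {V : Type*}

lemma deleteVert_le (G : SimpleGraph V) (v : V) : deleteVert G v ≤ G := fun _ _ h => h.1

lemma setOf_update_subset [DecidableEq V] {c : V → ℕ} (P : V → Prop) {u : V} {i k : ℕ}
    (hk : k ≠ i) : {w | P w ∧ update c u k w = i} ⊆ {w | P w ∧ c w = i} := by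
  rintro w ⟨hw, hcw⟩
  obtain rfl | hwu := eq_or_ne w u
  · exact absurd (by simpa using hcw) hk
  · exact ⟨hw, by rwa [update_of_ne hwu] at hcw⟩

variable [Finite V]

lemma IsColoring34.mono {G H : SimpleGraph V} {c : V → ℕ} (hc : IsColoring34 G c) (hHG : H ≤ G) :
    IsColoring34 H c := by
  refine ⟨hc.1, fun v => (ncard_le_ncard ?_).trans (hc.2 v)⟩
  rintro w ⟨hvw, hcw⟩
  exact ⟨hHG hvw, hcw⟩

lemma ncard_adj_deleteVert_le_degN (G : SimpleGraph V) (v x : V) (P : V → Prop) :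
    {w | (deleteVert G v).Adj x w ∧ P w}.ncard ≤ degN G x :=
  ncard_le_ncard fun _ hw => hw.1.1

lemma degN_deleteVert_add_one_le {G : SimpleGraph V} {u v : V} (h : G.Adj u v) :
    degN (deleteVert G v) u + 1 ≤ degN G u := by
  have hv : v ∉ {w | (deleteVert G v).Adj u w} := fun hv => hv.2.2 rfl
  rw [degN, ← ncard_insert_of_notMem hv]
  refine ncard_le_ncard fun w hw => ?_
  rcases mem_insert_iff.1 hw with rfl | hw
  exacts [h, hw.1]

lemma two_le_tpn {G : SimpleGraph V} {x a b : V} (hab : a ≠ b) (ha : G.Adj x a) (hb : G.Adj x b)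
    (hda : 3 ≤ degN G a) (hdb : 3 ≤ degN G b) : 2 ≤ tpn G x := by
  rw [tpn, ← ncard_pair hab]
  refine ncard_le_ncard fun w hw => ?_
  rcases hw with rfl | rfl
  exacts [⟨ha, hda⟩, ⟨hb, hdb⟩]

lemma ncard_color_add_ncard_color_swap {c : V → ℕ} (hcol : ∀ w, c w = 3 ∨ c w = 4) {i : ℕ}
    (hi : i = 3 ∨ i = 4) (P : V → Prop) :
    {w | P w ∧ c w = i}.ncard + {w | P w ∧ c w = 7 - i}.ncard = {w | P w}.ncard := by
  have hdisj : Disjoint {w | P w ∧ c w = i} {w | P w ∧ c w = 7 - i} := by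
    rw [disjoint_left]
    rintro w ⟨-, hw⟩ ⟨-, hw'⟩
    omega
  rw [← ncard_union_eq hdisj]
  congr 1
  ext w
  simp only [mem_union, mem_ofPred_eq]
  constructor
  · rintro (⟨h, -⟩ | ⟨h, -⟩) <;> exact h
  · intro h
    have := hcol w
    by_cases hw : c w = i
    exacts [Or.inl ⟨h, hw⟩, Or.inr ⟨h, by omega⟩]

lemma Saturated34.of_update [DecidableEq V] {H : SimpleGraph V} {c : V → ℕ}
    (hc : IsColoring34 H c) {u x : V} {i k : ℕ} (hk : k ≠ i) (h : Saturated34 H (update c u k) i x) :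
    Saturated34 H c i x := by
  have hcx : c x = i := (setOf_update_subset (fun _ => True) hk (a := x) ⟨trivial, h.1⟩).2
  refine ⟨hcx, le_antisymm (hcx ▸ hc.2 x) ?_⟩
  exact h.2.symm.le.trans (ncard_le_ncard (setOf_update_subset _ hk))

lemma isColoring34_update_of_deleteVert [DecidableEq V] {G : SimpleGraph V} {v : V} {c : V → ℕ}
    (hc : IsColoring34 (deleteVert G v) c) {i : ℕ} (hi : i = 3 ∨ i = 4)
    (hcnt : {w | G.Adj v w ∧ c w = i}.ncard ≤ i)
    (hunsat : ∀ x, G.Adj v x → ¬ Saturated34 (deleteVert G v) c i x) :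
    IsColoring34 G (update c v i) := by
  refine ⟨fun x => ?_, fun x => ?_⟩
  · obtain rfl | hxv := eq_or_ne x v
    · simpa using hi
    · simpa [update_of_ne hxv] using hc.1 x
  obtain rfl | hxv := eq_or_ne x v
  · rw [update_self]
    refine (ncard_le_ncard ?_).trans hcnt
    rintro w ⟨hxw, hcw⟩
    exact ⟨hxw, by rwa [update_of_ne hxw.ne'] at hcw⟩
  rw [update_of_ne hxv]
  set S := {w | (deleteVert G v).Adj x w ∧ c w = c x}
  have hS : S.ncard ≤ c x := hc.2 x
  by_cases hv : v ∈ {w | G.Adj x w ∧ update c v i w = c x}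
  · obtain ⟨hxv', hcx⟩ : G.Adj x v ∧ i = c x := by simpa using hv
    have hS' : S.ncard ≠ c x := fun h => hunsat x hxv'.symm ⟨hcx.symm, hcx ▸ h⟩
    have hsub : {w | G.Adj x w ∧ update c v i w = c x} ⊆ insert v S := by
      rintro w ⟨hxw, hcw⟩
      obtain rfl | hwv := eq_or_ne w v
      · exact mem_insert _ _
      · exact mem_insert_of_mem _ ⟨⟨hxw, hxv, hwv⟩, by rwa [update_of_ne hwv] at hcw⟩
    calc _ ≤ (insert v S).ncard := ncard_le_ncard hsub
      _ ≤ S.ncard + 1 := ncard_insert_le _ _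
      _ ≤ c x := by omega
  · refine (ncard_le_ncard ?_).trans hS
    rintro w ⟨hxw, hcw⟩
    have hwv : w ≠ v := by rintro rfl; exact hv ⟨hxw, hcw⟩
    exact ⟨⟨hxw, hxv, hwv⟩, by rwa [update_of_ne hwv] at hcw⟩

lemma recolorable34_of_unsaturated [DecidableEq V] {H : SimpleGraph V} {c : V → ℕ}
    (hc : IsColoring34 H c) {u : V} (hcnt : {w | H.Adj u w ∧ c w = 7 - c u}.ncard ≤ 7 - c u)
    (hunsat : ∀ x, H.Adj u x → ¬ Saturated34 H c (7 - c u) x) :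
    Recolorable34 H c u := by
  have hu := hc.1 u
  -- recoloring `u` extends the restriction of `c` to `H − u` across `u`; since `u` does not have
  -- color `7 - c u`, deleting it changes no count of that color
  refine isColoring34_update_of_deleteVert (G := H) (hc.mono (deleteVert_le H u)) (by omega)
    hcnt fun x hux hsat => hunsat x hux ⟨hsat.1, ?_⟩
  have hxu : x ≠ u := by rintro rfl; have := hsat.1; omega
  refine Eq.trans (congrArg ncard ?_) hsat.2
  ext w
  constructor
  · rintro ⟨hxw, hcw⟩
    refine ⟨⟨hxw, hxu, ?_⟩, hcw⟩
    rintro rfl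
    omega
  · rintro ⟨hxw, hcw⟩
    exact ⟨hxw.1, hcw⟩

lemma recolorable34_of_saturated_of_poor [DecidableEq V] {G : SimpleGraph V} {v u : V}
    {c : V → ℕ} (hc : IsColoring34 (deleteVert G v) c) (hvu : G.Adj v u) (hv : 3 ≤ degN G v)
    {i : ℕ} (hsat : Saturated34 (deleteVert G v) c i u) (hdeg : degN G u ≤ 8)
    (hpoor : degN G u ≤ 4 ∨ tpn G u ≤ 1) :
    Recolorable34 (deleteVert G v) c u := by
  obtain ⟨hcu, hcnt⟩ := hsat
  have hi : i = 3 ∨ i = 4 := hcu ▸ hc.1 u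
  have hsplit := ncard_color_add_ncard_color_swap hc.1 hi ((deleteVert G v).Adj u)
  have hdegu := degN_deleteVert_add_one_le hvu.symm
  rw [degN] at hdegu
  refine recolorable34_of_unsaturated hc (by rw [hcu]; omega) fun x hux hxsat => ?_
  rw [hcu] at hxsat
  have hx : 3 ≤ degN G x := by
    have := ncard_adj_deleteVert_le_degN G v x (c · = 7 - i)
    have := hxsat.2
    omega
  have htpn : 2 ≤ tpn G u := two_le_tpn hux.2.2.symm hvu.symm hux.1 hv hx
  have hxmem : 0 < {w | (deleteVert G v).Adj u w ∧ c w = 7 - i}.ncard :=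
    (ncard_pos).2 ⟨x, hux, hxsat.1⟩
  omega

theorem colorable34_of_saturated_neighbors_poor [DecidableEq V] {G : SimpleGraph V} {v : V}
    (hv : 3 ≤ degN G v) {i : ℕ} (hi : i = 3 ∨ i = 4) (c : V → ℕ)
    (hc : IsColoring34 (deleteVert G v) c) (hcnt : {w | G.Adj v w ∧ c w = i}.ncard ≤ i)
    (hpoor : ∀ u, G.Adj v u → Saturated34 (deleteVert G v) c i u →
      degN G u ≤ 8 ∧ (degN G u ≤ 4 ∨ tpn G u ≤ 1)) :
    Colorable34 G := by
  by_cases h : ∃ u, G.Adj v u ∧ Saturated34 (deleteVert G v) c i u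
  · obtain ⟨u, hvu, hsat⟩ := h
    have hk : 7 - c u ≠ i := by have := hsat.1; omega
    have hsub : {w | G.Adj v w ∧ update c u (7 - c u) w = i} ⊂ {w | G.Adj v w ∧ c w = i} :=
      (ssubset_iff_of_subset (setOf_update_subset _ hk)).2 ⟨u, ⟨hvu, hsat.1⟩, by simp [hk]⟩
    exact colorable34_of_saturated_neighbors_poor hv hi _
      (recolorable34_of_saturated_of_poor hc hvu hv hsat (hpoor u hvu hsat).1
        (hpoor u hvu hsat).2)
      ((ncard_le_ncard hsub.le).trans hcnt)
      fun x hvx hx => hpoor x hvx (hx.of_update hc hk)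
  · push Not at h
    exact ⟨_, isColoring34_update_of_deleteVert hc hi hcnt h⟩
termination_by {w | G.Adj v w ∧ c w = i}.ncard
decreasing_by exact ncard_lt_ncard hsub

end Colorable34

/-- If `G` is not (3,4)-colorable, `deg v ∈ {6, 7, 8}`, and `c` is a
(3,4)-coloring of `G − v`, then `v` has a saturated neighbor that is either a
`9⁺`-vertex or a `5⁺`-vertex with at least two 3^+-neighbors. -/
theorem stmt_7 {V : Type*} [Fintype V] (G : SimpleGraph V) (v : V)
    (hG : ¬ Colorable34 G) (hv : degN G v = 6 ∨ degN G v = 7 ∨ degN G v = 8)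
    (c : V → ℕ) (hc : IsColoring34 (deleteVert G v) c) :
    ∃ u : V, G.Adj v u ∧
      (Saturated34 (deleteVert G v) c 3 u ∨ Saturated34 (deleteVert G v) c 4 u) ∧
      (9 ≤ degN G u ∨ (5 ≤ degN G u ∧ 2 ≤ tpn G u)) := by
  classical
  by_contra! hbig
  have hpoor : ∀ i, ∀ u, G.Adj v u → Saturated34 (deleteVert G v) c i u → (i = 3 ∨ i = 4) →
      degN G u ≤ 8 ∧ (degN G u ≤ 4 ∨ tpn G u ≤ 1) := by
    rintro i u hvu hsat (rfl | rfl)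
    · have := hbig u hvu (Or.inl hsat); omega
    · have := hbig u hvu (Or.inr hsat); omega
  have hsplit : {w | G.Adj v w ∧ c w = 3}.ncard + {w | G.Adj v w ∧ c w = 4}.ncard = degN G v :=
    ncard_color_add_ncard_color_swap hc.1 (Or.inl rfl) (G.Adj v)
  have hv3 : 3 ≤ degN G v := by omega
  rcases le_or_gt {w | G.Adj v w ∧ c w = 4}.ncard 4 with h4 | h4
  · exact hG (colorable34_of_saturated_neighbors_poor hv3 (Or.inr rfl) c hc h4
      fun u hvu hsat => hpoor 4 u hvu hsat (Or.inr rfl))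
  · exact hG (colorable34_of_saturated_neighbors_poor hv3 (Or.inl rfl) c hc (by omega)
      fun u hvu hsat => hpoor 3 u hvu hsat (Or.inl rfl))
end

section
/- Let G be a minimally non-(3,4)-colorable graph. Then every vertex of degree 4 or 5 in G has a neighbor that is either a vertex of degree at least 9, or a vertex of degree at least 6 with at least two 3^+-neighbors. -/
/-!
Take a (3,4)-coloring `c` of `G − v` with as few vertices colored 4 as possible. Since `G` is not
colorable, `v` cannot receive color 4; as `deg v ≤ 5`, this forces a neighbor `u` of `v` colored 4
with exactly four neighbors colored 4 in `G − v` (otherwise `v` could take color 3 instead).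
If `u` had neither degree `≥ 9` nor degree `≥ 6` with two 3⁺-neighbors, then `u` has at most
three neighbors colored 3 in `G − v`, each of degree at most 2 (the only 3⁺-neighbor of `u` being
`v`), so `u` could be recolored 3, contradicting the minimality of `c`.
-/

open Function

section

variable {V : Type*}

section Degree

variable [Finite V] {G : SimpleGraph V}

lemma degN_deleteVert_le (v y : V) : degN (deleteVert G v) y ≤ degN G y :=
  Set.ncard_le_ncard fun _ hw => hw.1

lemma degN_deleteVert_add_one {u v : V} (huv : G.Adj u v) :
    degN (deleteVert G v) u + 1 = degN G u := by
  have hN : {w | G.Adj u w} = insert v {w | (deleteVert G v).Adj u w} := by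
    ext w
    by_cases hw : w = v
    · simp [hw, huv]
    · simp [deleteVert, hw, huv.ne]
  unfold degN
  rw [hN, Set.ncard_insert_of_notMem fun h => h.2.2 rfl]

lemma degN_le_two_of_tpn_le_one {u v y : V} (ht : tpn G u ≤ 1) (huv : G.Adj u v)
    (hv : 3 ≤ degN G v) (huy : G.Adj u y) (hyv : y ≠ v) : degN G y ≤ 2 := by
  by_contra! hy
  have hpair : {v, y} ⊆ {w | G.Adj u w ∧ 3 ≤ degN G w} := by
    rintro w (rfl | rfl)
    exacts [⟨huv, hv⟩, ⟨huy, hy⟩]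
  have := Set.ncard_le_ncard hpair
  rw [Set.ncard_pair hyv.symm] at this
  exact absurd ht (by unfold tpn; omega)

end Degree

namespace Saturated34

variable [Finite V] {H : SimpleGraph V} {c : V → ℕ} {i : ℕ} {u : V}

lemma le_degN (hu : Saturated34 H c i u) : i ≤ degN H u :=
  hu.2 ▸ Set.ncard_le_ncard fun _ hw => hw.1

lemma eq_of_adj (hu : Saturated34 H c i u) (hdeg : degN H u = i) {y : V} (hy : H.Adj u y) :
    c y = i := by
  have hsub : {w | H.Adj u w ∧ c w = i} ⊆ {w | H.Adj u w} := fun _ hw => hw.1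
  have heq := Set.eq_of_subset_of_ncard_le hsub (by rw [hu.2]; exact hdeg.le)
  exact (heq.symm ▸ hy : y ∈ {w | H.Adj u w ∧ c w = i}).2

end Saturated34

section Coloring

variable [Finite V]

lemma isColoring34_update_of_not_saturated [DecidableEq V] {G : SimpleGraph V} {c : V → ℕ} {v : V} {i : ℕ}
    (hc : IsColoring34 (deleteVert G v) c) (hi : i = 3 ∨ i = 4)
    (hv : {w | G.Adj v w ∧ c w = i}.ncard ≤ i)
    (hsat : ∀ u, G.Adj v u → ¬ Saturated34 (deleteVert G v) c i u) :
    IsColoring34 G (update c v i) := by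
  refine ⟨fun x => ?_, fun x => ?_⟩
  · rcases eq_or_ne x v with rfl | hx
    · simpa using hi
    · simpa [hx] using hc.1 x
  rcases eq_or_ne x v with rfl | hxv
  · convert hv using 2
    · ext w
      simp only [Set.mem_ofPred_eq, update_self]
      exact and_congr_right fun hw => by rw [update_of_ne hw.ne']
    · simp
  rw [update_of_ne hxv]
  set T := {w | (deleteVert G v).Adj x w ∧ c w = c x}
  have hsub : {w | G.Adj x w ∧ update c v i w = c x} ⊆ insert v T := by
    rintro w ⟨hw, hcw⟩
    rcases eq_or_ne w v with rfl | hwv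
    · exact Set.mem_insert _ _
    · rw [update_of_ne hwv] at hcw
      exact Set.mem_insert_of_mem _ ⟨⟨hw, hxv, hwv⟩, hcw⟩
  by_cases hxi : G.Adj x v ∧ c x = i
  · -- `x` is not saturated, so there is room for `v` among its neighbors of color `c x`
    have hT : T.ncard < c x :=
      lt_of_le_of_ne (hc.2 x) fun h => hsat x hxi.1.symm ⟨hxi.2, hxi.2 ▸ h⟩
    have := (Set.ncard_le_ncard hsub).trans (Set.ncard_insert_le v T)
    omega
  · have hvS : v ∉ {w | G.Adj x w ∧ update c v i w = c x} := by
      rintro ⟨hxv', hcv⟩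
      exact hxi ⟨hxv', by simpa using hcv.symm⟩
    refine le_trans (Set.ncard_le_ncard fun w hw => ?_) (hc.2 x)
    rcases hsub hw with rfl | hwT
    exacts [absurd hw hvS, hwT]

lemma exists_saturated_neighbor_of_not_colorable {G : SimpleGraph V} {c : V → ℕ} {v : V}
    (hnc : ¬ Colorable34 G) (hc : IsColoring34 (deleteVert G v) c) (hv : degN G v ≤ 5) :
    ∃ u, G.Adj v u ∧ Saturated34 (deleteVert G v) c 4 u := by
  classical
  by_contra! hsat
  by_cases h4 : {w | G.Adj v w ∧ c w = 4}.ncard ≤ 4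
  · exact hnc ⟨_, isColoring34_update_of_not_saturated hc (Or.inr rfl) h4 hsat⟩
  -- all neighbors of `v` are colored 4, so `v` can take color 3
  have hsub : {w | G.Adj v w ∧ c w = 4} ⊆ {w | G.Adj v w} := fun _ hw => hw.1
  have hall : ∀ w, G.Adj v w → c w = 4 := fun w hw =>
    (Set.eq_of_subset_of_ncard_le hsub (by unfold degN at hv; omega) ▸ hw :
      w ∈ {w | G.Adj v w ∧ c w = 4}).2
  have h3 : {w | G.Adj v w ∧ c w = 3} = ∅ :=
    Set.eq_empty_of_forall_notMem fun w ⟨hw, hcw⟩ => by simp [hall w hw] at hcw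
  refine hnc ⟨_, isColoring34_update_of_not_saturated hc (Or.inl rfl) (by simp [h3]) ?_⟩
  exact fun u hu hsu => absurd ((hall u hu).symm.trans hsu.1) (by norm_num)

lemma recolorable34_of_saturated [DecidableEq V] {H : SimpleGraph V} {c : V → ℕ} {u : V}
    (hc : IsColoring34 H c) (hu : Saturated34 H c 4 u) (hdeg : degN H u ≤ 7)
    (hlow : ∀ y, H.Adj u y → c y = 3 → degN H y ≤ 3) : Recolorable34 H c u := by
  have hcu : 7 - c u = 3 := by rw [hu.1]
  unfold Recolorable34
  rw [hcu]
  refine ⟨fun x => ?_, fun x => ?_⟩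
  · rcases eq_or_ne x u with rfl | hx
    · simp
    · simpa [hx] using hc.1 x
  rcases eq_or_ne u x with rfl | hxu
  · -- `u` keeps its four neighbors colored 4, which leaves room for at most `7 - 4` colored 3
    rw [update_self]
    have h3 : {w | H.Adj u w ∧ update c u 3 w = 3} = {w | H.Adj u w ∧ c w = 3} := by
      ext w
      simp only [Set.mem_ofPred_eq]
      exact and_congr_right fun hw => by rw [update_of_ne hw.ne']
    have hdisj : Disjoint {w | H.Adj u w ∧ c w = 3} {w | H.Adj u w ∧ c w = 4} :=
      Set.disjoint_left.2 fun w h3 h4 => absurd (h3.2.symm.trans h4.2) (by norm_num)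
    have hunion := Set.ncard_le_ncard (Set.union_subset (fun _ hw => hw.1) (fun _ hw => hw.1) :
      {w | H.Adj u w ∧ c w = 3} ∪ {w | H.Adj u w ∧ c w = 4} ⊆ {w | H.Adj u w})
    rw [Set.ncard_union_eq hdisj, hu.2] at hunion
    rw [h3]
    unfold degN at hdeg
    omega
  rw [update_of_ne hxu.symm]
  by_cases hx : H.Adj x u ∧ c x = 3
  · exact (Set.ncard_le_ncard fun _ hw => hw.1).trans (hx.2 ▸ hlow x hx.1.symm hx.2)
  have hsub : {w | H.Adj x w ∧ update c u 3 w = c x} ⊆ {w | H.Adj x w ∧ c w = c x} := by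
    rintro w ⟨hw, hcw⟩
    refine ⟨hw, ?_⟩
    rcases eq_or_ne w u with rfl | hwu
    · rw [update_self] at hcw
      exact absurd ⟨hw, hcw.symm⟩ hx
    · rwa [update_of_ne hwu] at hcw
  exact (Set.ncard_le_ncard hsub).trans (hc.2 x)

lemma ncard_update_three_lt [DecidableEq V] {c : V → ℕ} {u : V} (hu : c u = 4) :
    {x | update c u 3 x = 4}.ncard < {x | c x = 4}.ncard := by
  have hset : {x | update c u 3 x = 4} = {x | c x = 4} \ {u} := by
    ext x
    rcases eq_or_ne x u with rfl | hx
    · simp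
    · simp [hx]
  rw [hset]
  exact Set.ncard_sdiff_singleton_lt_of_mem hu

lemma not_recolorable34_of_minimalFor [DecidableEq V] {H : SimpleGraph V} {c : V → ℕ}
    (hmin : MinimalFor (IsColoring34 H) (fun c => {x | c x = 4}.ncard) c) {u : V}
    (hu : c u = 4) : ¬ Recolorable34 H c u := by
  intro hrec
  have hlt := ncard_update_three_lt (c := c) hu
  have hrec' : IsColoring34 H (update c u 3) := by simpa [Recolorable34, hu] using hrec
  exact absurd (hmin.2 hrec' hlt.le) (not_le.2 hlt)

end Coloring

end

/-- In a minimally non-(3,4)-colorable graph, every vertex of degree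
4 or 5 has a neighbor that is either a `9⁺`-vertex or a `6⁺`-vertex with at least
two 3^+-neighbors. -/
theorem stmt_8 {V : Type*} [Fintype V] (G : SimpleGraph V)
    (hG : MinNonColorable34 G) (v : V) (hv : degN G v = 4 ∨ degN G v = 5) :
    ∃ u : V, G.Adj v u ∧ (9 ≤ degN G u ∨ (6 ≤ degN G u ∧ 2 ≤ tpn G u)) := by
  classical
  by_contra! hcon
  obtain ⟨hnc, hdel, -⟩ := hG
  obtain ⟨c, hmin⟩ := exists_minimalFor_of_wellFoundedLT _ (fun c => {x | c x = 4}.ncard) (hdel v)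
  obtain ⟨u, hvu, hsat⟩ := exists_saturated_neighbor_of_not_colorable hnc hmin.1 (by omega)
  have hdeg := degN_deleteVert_add_one hvu.symm
  have h4 := hsat.le_degN
  obtain ⟨h8, htpn⟩ := hcon u hvu
  refine not_recolorable34_of_minimalFor hmin hsat.1
    (recolorable34_of_saturated hmin.1 hsat (by omega) fun y huy hy3 => ?_)
  rcases (by omega : degN G u = 5 ∨ 6 ≤ degN G u) with h5 | h6
  · exact absurd (hsat.eq_of_adj (by omega) huy) (by omega)
  · calc degN (deleteVert G v) y ≤ degN G y := degN_deleteVert_le v y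
      _ ≤ 2 := degN_le_two_of_tpn_le_one (by have := htpn h6; omega) hvu.symm (by omega)
          huy.1 huy.2.2
      _ ≤ 3 := by norm_num
end

section
/- Let G be a minimally non-(3,4)-colorable graph with girth at least 5, and let C = u_1 u_2 u_3 u_4 u_5 u_6 be a 6-cycle in G such that exactly two of the vertices u_1, ..., u_6 have degree 2 and exactly one of them is a 5p-vertex. Then at most two of the vertices u_1, ..., u_6 are 5s-vertices or 6p-vertices. -/
lemma Set.eq_or_eq_of_ncard_eq_two {α : Type*} {s : Set α} {a b w : α} (hs : s.ncard = 2)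
    (ha : a ∈ s) (hb : b ∈ s) (hab : a ≠ b) (hw : w ∈ s) : w = a ∨ w = b := by
  have : {a, b} = s := Set.eq_of_subset_of_ncard_le (by simp [Set.insert_subset_iff, ha, hb])
    (by rw [hs, Set.ncard_pair hab]) (Set.finite_of_ncard_pos (by omega))
  rw [← this] at hw
  simpa using hw

open Function

section

variable {V : Type*}

section Counting

variable [Finite V] {G H : SimpleGraph V} {c : V → ℕ}

lemma degN_mono (h : H ≤ G) (v : V) : degN H v ≤ degN G v :=
  Set.ncard_le_ncard (fun _ hw => h hw) (Set.toFinite _)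

lemma ncard_adj_color_le_degN (H : SimpleGraph V) (c : V → ℕ) (i : ℕ) (v : V) :
    {w | H.Adj v w ∧ c w = i}.ncard ≤ degN H v :=
  Set.ncard_le_ncard (fun _ hw => hw.1) (Set.toFinite _)

lemma Saturated34.le_degN_s11 {i : ℕ} {u : V} (h : Saturated34 H c i u) : i ≤ degN H u :=
  h.2 ▸ ncard_adj_color_le_degN H c i u

lemma ncard_adj_color_three_add_four (h34 : ∀ v, c v = 3 ∨ c v = 4) (v : V) :
    {w | H.Adj v w ∧ c w = 3}.ncard + {w | H.Adj v w ∧ c w = 4}.ncard = degN H v := by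
  rw [← Set.ncard_union_eq _ (Set.toFinite _) (Set.toFinite _)]
  · congr 1
    ext w
    simp only [Set.mem_union, Set.mem_ofPred_eq, ← and_or_left, and_iff_left_iff_imp]
    exact fun _ => h34 w
  · exact Set.disjoint_left.2 fun w h3 h4 => by simp_all

end Counting

section Recoloring

variable [Finite V] {H : SimpleGraph V} {c c' : V → ℕ} {v p : V} {i : ℕ}

lemma ncard_adj_color_le_of_imp (h : ∀ x, H.Adj v x → c' x = i → c x = i) :
    {x | H.Adj v x ∧ c' x = i}.ncard ≤ {x | H.Adj v x ∧ c x = i}.ncard :=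
  Set.ncard_le_ncard (fun x ⟨hvx, hx⟩ => ⟨hvx, h x hvx hx⟩) (Set.toFinite _)

lemma ncard_adj_color_le_succ_of_imp (h : ∀ x, H.Adj v x → c' x = i → x ≠ p → c x = i) :
    {x | H.Adj v x ∧ c' x = i}.ncard ≤ {x | H.Adj v x ∧ c x = i}.ncard + 1 :=
  calc {x | H.Adj v x ∧ c' x = i}.ncard ≤ (insert p {x | H.Adj v x ∧ c x = i}).ncard :=
        Set.ncard_le_ncard (fun x ⟨hvx, hx⟩ =>
          (eq_or_ne x p).imp id fun hxp => ⟨hvx, h x hvx hx hxp⟩) (Set.toFinite _)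
    _ ≤ _ := Set.ncard_insert_le _ _

lemma ncard_adj_color_lt_of_imp (h : ∀ x, H.Adj v x → c' x = i → x ≠ p ∧ c x = i)
    (hp : H.Adj v p) (hcp : c p = i) :
    {x | H.Adj v x ∧ c' x = i}.ncard < {x | H.Adj v x ∧ c x = i}.ncard :=
  Set.ncard_lt_ncard (Set.ssubset_iff_subset_ne.2 ⟨fun x ⟨hvx, hx⟩ => ⟨hvx, (h x hvx hx).2⟩,
    fun heq => (h p hp (heq.symm.subset ⟨hp, hcp⟩).2).1 rfl⟩) (Set.toFinite _)

lemma IsColoring34.recolor (hc : IsColoring34 H c) (h34 : ∀ v, c' v = 3 ∨ c' v = 4)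
    (h : ∀ v, (c' v ≠ c v ∨ ∃ w, H.Adj v w ∧ c' w = c' v ∧ c w ≠ c' v) →
      {w | H.Adj v w ∧ c' w = c' v}.ncard ≤ c' v) :
    IsColoring34 H c' := by
  refine ⟨h34, fun v => ?_⟩
  by_cases hv : c' v ≠ c v ∨ ∃ w, H.Adj v w ∧ c' w = c' v ∧ c w ≠ c' v
  · exact h v hv
  push Not at hv
  obtain ⟨hv, hw⟩ := hv
  calc _ ≤ {w | H.Adj v w ∧ c w = c' v}.ncard := ncard_adj_color_le_of_imp hw
    _ ≤ c' v := hv ▸ hc.2 v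

variable [DecidableEq V]

lemma IsColoring34.update_of_not_saturated34 (hc : IsColoring34 H c) {u : V} {j : ℕ}
    (hj : j = 3 ∨ j = 4) (hu : {w | H.Adj u w ∧ c w = j}.ncard ≤ j) (hsat : ∀ w, H.Adj u w → ¬ Saturated34 H c j w) :
    IsColoring34 H (update c u j) := by
  refine hc.recolor (fun v => ?_) (fun v hv => ?_)
  · rcases eq_or_ne v u with rfl | hvu
    · simpa using hj
    · simpa [hvu] using hc.1 v
  rcases eq_or_ne v u with rfl | hvu
  · simp only [update_self]
    refine le_trans (ncard_adj_color_le_of_imp fun x hvx hx => ?_) hu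
    rwa [update_of_ne hvx.ne'] at hx
  · simp only [update_of_ne hvu, ne_eq, not_true_eq_false, false_or] at hv ⊢
    obtain ⟨w, hvw, hw, hcw⟩ := hv
    obtain rfl : w = u := by
      by_contra hwu
      rw [update_of_ne hwu] at hw
      exact hcw hw
    rw [update_self] at hw
    subst hw
    have hlt : {x | H.Adj v x ∧ c x = c v}.ncard < c v :=
      lt_of_le_of_ne (hc.2 v) fun hsat' => hsat v hvw.symm ⟨rfl, hsat'⟩
    have : {x | H.Adj v x ∧ update c w (c v) x = c v}.ncard ≤
        {x | H.Adj v x ∧ c x = c v}.ncard + 1 :=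
      ncard_adj_color_le_succ_of_imp fun x _ hx hxw => by rwa [update_of_ne hxw] at hx
    omega

lemma IsColoring34.recolorable34 (hc : IsColoring34 H c) {u : V}
    (hu : {w | H.Adj u w ∧ c w = 7 - c u}.ncard ≤ 7 - c u)
    (hsat : ∀ w, H.Adj u w → ¬ Saturated34 H c (7 - c u) w) : Recolorable34 H c u :=
  hc.update_of_not_saturated34 (by rcases hc.1 u with h | h <;> simp [h]) hu hsat

lemma IsColoring34.exists_saturated34_of_not_recolorable34 (hc : IsColoring34 H c) {u : V}
    (hrec : ¬ Recolorable34 H c u) (hu : {w | H.Adj u w ∧ c w = 7 - c u}.ncard ≤ 7 - c u) :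
    ∃ w, H.Adj u w ∧ Saturated34 H c (7 - c u) w := by
  by_contra! h
  exact hrec (hc.recolorable34 hu h)

lemma IsColoring34.lt_ncard_of_not_recolorable34 (hc : IsColoring34 H c) {u : V}
    (hrec : ¬ Recolorable34 H c u) (hsmall : ∀ w, H.Adj u w → degN H w ≤ 2) :
    7 - c u < {w | H.Adj u w ∧ c w = 7 - c u}.ncard := by
  by_contra! hle
  obtain ⟨w, huw, hw⟩ := hc.exists_saturated34_of_not_recolorable34 hrec hle
  have := hw.le_degN_s11.trans (hsmall w huw)
  rcases hc.1 u with h | h <;> omega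

lemma IsColoring34.recolorable34_of_ncard_eq_zero (hc : IsColoring34 H c) {u : V}
    (hu : {w | H.Adj u w ∧ c w = 7 - c u}.ncard = 0) : Recolorable34 H c u :=
  hc.recolorable34 (by omega) fun w huw hw =>
    Set.eq_empty_iff_forall_notMem.1 ((Set.ncard_eq_zero (Set.toFinite _)).1 hu) w ⟨huw, hw.1⟩

lemma IsColoring34.swap (hc : IsColoring34 H c) {p q : V} (hpq : H.Adj p q) (hp : c p = 3)
    (hq : c q = 4) (hp4 : {w | H.Adj p w ∧ c w = 4}.ncard ≤ 5)
    (hq3 : {w | H.Adj q w ∧ c w = 3}.ncard ≤ 4)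
    (hp' : ∀ w, H.Adj p w → w ≠ q → ¬ Saturated34 H c 4 w)
    (hq' : ∀ w, H.Adj q w → w ≠ p → ¬ Saturated34 H c 3 w) :
    IsColoring34 H (update (update c p 4) q 3) := by
  set c' := update (update c p 4) q 3
  have hc'p : c' p = 4 := by simp [c', hpq.ne]
  have hc'q : c' q = 3 := by simp [c']
  have hc'o : ∀ w, w ≠ p → w ≠ q → c' w = c w := fun w hwp hwq => by simp [c', hwp, hwq]
  have hval : ∀ w, c' w = c w ∨ w = p ∨ w = q := fun w => by
    by_cases hwp : w = p <;> by_cases hwq : w = q <;> simp_all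
  refine hc.recolor (fun v => ?_) (fun v hv => ?_)
  · rcases hval v with h | rfl | rfl <;> simp_all [hc.1 v]
  by_cases hvp : v = p
  · subst hvp
    have := ncard_adj_color_lt_of_imp (c' := c') (i := 4) (fun x hvx hx => ?_) hpq hq
    · rw [hc'p]; omega
    rcases hval x with h | rfl | rfl
    · exact ⟨by rintro rfl; simp_all, h ▸ hx⟩
    · exact absurd hvx (H.loopless.irrefl _)
    · simp_all
  by_cases hvq : v = q
  · subst hvq
    have := ncard_adj_color_lt_of_imp (c' := c') (i := 3) (fun x hvx hx => ?_) hpq.symm hp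
    · rw [hc'q]; omega
    rcases hval x with h | rfl | rfl
    · exact ⟨by rintro rfl; simp_all, h ▸ hx⟩
    · simp_all
    · exact absurd hvx (H.loopless.irrefl _)
  rw [hc'o v hvp hvq] at hv ⊢
  obtain ⟨w, hvw, hw, hcw⟩ := hv.resolve_left (by simp)
  have hwpq : w = p ∨ w = q := (hval w).resolve_left fun h => hcw (h ▸ hw)
  have hlt : {x | H.Adj v x ∧ c x = c v}.ncard < c v := by
    refine lt_of_le_of_ne (hc.2 v) fun hsat => ?_
    rcases hwpq with rfl | rfl
    · exact hp' v hvw.symm hvq ⟨by rw [← hw, hc'p], by rwa [← hw, hc'p] at hsat⟩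
    · exact hq' v hvw.symm hvp ⟨by rw [← hw, hc'q], by rwa [← hw, hc'q] at hsat⟩
  have : {x | H.Adj v x ∧ c' x = c v}.ncard ≤ {x | H.Adj v x ∧ c x = c v}.ncard + 1 :=
    ncard_adj_color_le_succ_of_imp (p := w) fun x hvx hx hxw => by
    rcases hval x with h | rfl | rfl
    · exact h ▸ hx
    all_goals rcases hwpq with rfl | rfl <;> simp_all
  omega

lemma IsColoring34.recolor_path (hc : IsColoring34 H c) {x y z : V} (hxy : H.Adj x y)
    (hyz : H.Adj y z) (hxz : ¬ H.Adj x z) (hx : c x = 4) (hy : c y = 3) (hz : c z = 4)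
    (hy4 : ∀ w, H.Adj y w → c w = 4 → w = x ∨ w = z)
    (hx3 : {w | H.Adj x w ∧ c w = 3}.ncard ≤ 4) (hz3 : {w | H.Adj z w ∧ c w = 3}.ncard ≤ 4)
    (hxs : ∀ w, H.Adj x w → w ≠ y → degN H w ≤ 2) (hzs : ∀ w, H.Adj z w → w ≠ y → degN H w ≤ 2) :
    IsColoring34 H (update (update (update c x 3) z 3) y 4) := by
  set c' := update (update (update c x 3) z 3) y 4
  have hc'x : c' x = 3 := by simp [c', update_apply, hxy.ne]
  have hc'y : c' y = 4 := by simp [c']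
  have hc'z : c' z = 3 := by simp [c', hyz.ne']
  have hval : ∀ w, c' w = c w ∨ w = x ∨ w = y ∨ w = z := fun w => by
    by_cases hwx : w = x <;> by_cases hwy : w = y <;> by_cases hwz : w = z <;> simp_all [c']
  refine hc.recolor (fun v => ?_) (fun v hv => ?_)
  · rcases hval v with h | rfl | rfl | rfl <;> simp_all [hc.1 v]
  by_cases hvy : v = y
  · subst hvy
    have hempty : {w | H.Adj v w ∧ c' w = 4} = ∅ :=
      Set.eq_empty_of_forall_notMem fun w ⟨hvw, hw⟩ => by
      rcases hval w with h | rfl | rfl | rfl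
      · rcases hy4 w hvw (h ▸ hw) with rfl | rfl <;> simp_all
      all_goals simp_all
    simp [hc'y, hempty]
  by_cases hvx : v = x
  · subst hvx
    have := ncard_adj_color_lt_of_imp (c' := c') (i := 3) (fun w hvw hw => ?_) hxy hy
    · rw [hc'x]; omega
    refine ⟨by rintro rfl; simp_all, ?_⟩
    rcases hval w with h | rfl | rfl | rfl <;> simp_all
  by_cases hvz : v = z
  · subst hvz
    have := ncard_adj_color_lt_of_imp (c' := c') (i := 3) (fun w hvw hw => ?_) hyz.symm hy
    · rw [hc'z]; omega
    refine ⟨by rintro rfl; simp_all, ?_⟩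
    rcases hval w with h | rfl | rfl | rfl <;> simp_all [H.adj_comm]
  have hc'v : c' v = c v := by simp [c', hvx, hvy, hvz]
  rw [hc'v] at hv ⊢
  obtain ⟨w, hvw, hw, hcw⟩ := hv.resolve_left (by simp)
  have hsmall : degN H v ≤ 2 := by
    rcases hval w with h | rfl | rfl | rfl
    · exact absurd (h ▸ hw) hcw
    · exact hxs v hvw.symm hvy
    · rcases hy4 v hvw.symm (by rw [← hw, hc'y]) with rfl | rfl <;> simp_all
    · exact hzs v hvw.symm hvy
  have := ncard_adj_color_le_degN H c' (c v) v
  rcases hc.1 v with h | h <;> omega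

end Recoloring

section DeleteEdge

variable {G : SimpleGraph V} {a b : V} {c : V → ℕ}

lemma deleteEdges_adj_iff_of_ne {v w : V} (ha : v ≠ a) (hb : v ≠ b) :
    (G.deleteEdges {s(a, b)}).Adj v w ↔ G.Adj v w := by
  simp [SimpleGraph.deleteEdges_adj, ha, hb]

lemma degN_deleteEdges_of_ne {v : V} (ha : v ≠ a) (hb : v ≠ b) :
    degN (G.deleteEdges {s(a, b)}) v = degN G v := by
  simp only [degN, deleteEdges_adj_iff_of_ne ha hb]

lemma eq_of_deleteEdges_adj_of_degN_eq_two (ha : degN G a = 2) (hab : G.Adj a b) {z w : V}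
    (haz : G.Adj a z) (hbz : b ≠ z) (hw : (G.deleteEdges {s(a, b)}).Adj a w) : w = z :=
  (Set.eq_or_eq_of_ncard_eq_two ha hab haz hbz (G.deleteEdges_le _ hw)).resolve_left <| by
    rintro rfl
    simp [SimpleGraph.deleteEdges_adj] at hw

variable [Finite V]

lemma degN_deleteEdges_add_one_left (hab : G.Adj a b) :
    degN (G.deleteEdges {s(a, b)}) a + 1 = degN G a := by
  have : {w | G.Adj a w} = insert b {w | (G.deleteEdges {s(a, b)}).Adj a w} := by
    ext w
    by_cases hw : w = b <;> simp [SimpleGraph.deleteEdges_adj, hw, hab, hab.ne]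
  rw [degN, degN, this, Set.ncard_insert_of_notMem (by simp [SimpleGraph.deleteEdges_adj])]

lemma degN_deleteEdges_add_one_right (hab : G.Adj a b) :
    degN (G.deleteEdges {s(a, b)}) b + 1 = degN G b := by
  rw [Sym2.eq_swap]
  exact degN_deleteEdges_add_one_left hab.symm

lemma IsColoring34.of_deleteEdges (hc : IsColoring34 (G.deleteEdges {s(a, b)}) c)
    (h : c a = c b → ¬ Saturated34 (G.deleteEdges {s(a, b)}) c (c a) a ∧
      ¬ Saturated34 (G.deleteEdges {s(a, b)}) c (c b) b) :
    IsColoring34 G c := by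
  set H := G.deleteEdges {s(a, b)}
  refine ⟨hc.1, fun v => ?_⟩
  have hadj : ∀ x, G.Adj v x → s(v, x) ≠ s(a, b) → H.Adj v x := fun x hvx hne => by
    simpa [H, SimpleGraph.deleteEdges_adj, hvx] using hne
  by_cases hv : ∃ x, G.Adj v x ∧ c x = c v ∧ s(v, x) = s(a, b)
  · obtain ⟨x, hvx, hx, hvxab⟩ := hv
    have hlt : {y | H.Adj v y ∧ c y = c v}.ncard < c v := by
      refine lt_of_le_of_ne (hc.2 v) fun hsat => ?_
      rcases Sym2.eq_iff.1 hvxab with ⟨rfl, rfl⟩ | ⟨rfl, rfl⟩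
      · exact (h hx.symm).1 ⟨rfl, hsat⟩
      · exact (h hx).2 ⟨rfl, hsat⟩
    have hsub : {y | G.Adj v y ∧ c y = c v} ⊆ insert x {y | H.Adj v y ∧ c y = c v} :=
      fun y ⟨hvy, hy⟩ => by
        rcases eq_or_ne y x with rfl | hyx
        · exact Set.mem_insert _ _
        · exact Set.mem_insert_of_mem _
            ⟨hadj y hvy fun h' => hyx (Sym2.congr_right.1 (h'.trans hvxab.symm)), hy⟩
    have := (Set.ncard_le_ncard hsub (Set.toFinite _)).trans (Set.ncard_insert_le _ _)
    omega
  · push Not at hv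
    refine le_trans (Set.ncard_le_ncard ?_ (Set.toFinite _)) (hc.2 v)
    exact fun y ⟨hvy, hy⟩ => ⟨hadj y hvy (hv y hvy hy), hy⟩

lemma eq_of_isColoring34_deleteEdges (hnc : ¬ Colorable34 G)
    (hc : IsColoring34 (G.deleteEdges {s(a, b)}) c) : c a = c b := by
  by_contra h
  exact hnc ⟨c, hc.of_deleteEdges fun h' => absurd h' h⟩

lemma saturated34_or_saturated34_of_deleteEdges (hnc : ¬ Colorable34 G)
    (hc : IsColoring34 (G.deleteEdges {s(a, b)}) c) :
    Saturated34 (G.deleteEdges {s(a, b)}) c (c a) a ∨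
      Saturated34 (G.deleteEdges {s(a, b)}) c (c b) b := by
  by_contra h
  exact hnc ⟨c, hc.of_deleteEdges fun _ => not_or.1 h⟩

variable [DecidableEq V]

lemma not_recolorable34_left (hnc : ¬ Colorable34 G) (hab : a ≠ b)
    (hc : IsColoring34 (G.deleteEdges {s(a, b)}) c) :
    ¬ Recolorable34 (G.deleteEdges {s(a, b)}) c a := fun hrec => by
  have h := eq_of_isColoring34_deleteEdges hnc hrec
  rw [update_self, update_of_ne hab.symm, ← eq_of_isColoring34_deleteEdges hnc hc] at h
  rcases hc.1 a with h' | h' <;> omega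

lemma not_recolorable34_right (hnc : ¬ Colorable34 G) (hab : a ≠ b)
    (hc : IsColoring34 (G.deleteEdges {s(a, b)}) c) :
    ¬ Recolorable34 (G.deleteEdges {s(a, b)}) c b := by
  rw [Sym2.eq_swap] at hc ⊢
  exact not_recolorable34_left hnc hab.symm hc

lemma saturated34_of_deleteEdges_of_adj_eq (hnc : ¬ Colorable34 G) (hab : a ≠ b)
    (hc : IsColoring34 (G.deleteEdges {s(a, b)}) c) {z : V}
    (hz : ∀ w, (G.deleteEdges {s(a, b)}).Adj a w → w = z) :
    Saturated34 (G.deleteEdges {s(a, b)}) c (7 - c a) z := by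
  obtain ⟨w, haw, hw⟩ := hc.exists_saturated34_of_not_recolorable34
    (not_recolorable34_left hnc hab hc) <| by
      calc _ ≤ ({z} : Set V).ncard := Set.ncard_le_ncard (fun w hw => hz w hw.1) (Set.toFinite _)
        _ ≤ 7 - c a := by rw [Set.ncard_singleton]; rcases hc.1 a with h | h <;> omega
  exact hz w haw ▸ hw

end DeleteEdge

section Poor

variable [Finite V] {G : SimpleGraph V} {x y z : V}

lemma ncard_le_tpn {s : Set V} (hs : ∀ w ∈ s, G.Adj x w ∧ 3 ≤ degN G w) : s.ncard ≤ tpn G x :=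
  Set.ncard_le_ncard hs (Set.toFinite _)

lemma degN_le_two_of_tpn_le {s : Set V} (hs : ∀ w ∈ s, G.Adj x w ∧ 3 ≤ degN G w)
    (ht : tpn G x ≤ s.ncard) {w : V} (hw : G.Adj x w) (hws : w ∉ s) : degN G w ≤ 2 := by
  by_contra! h
  have := ncard_le_tpn (s := insert w s) fun v hv => hv.elim (fun h' => h' ▸ ⟨hw, h⟩) (hs v)
  rw [Set.ncard_insert_of_notMem hws (Set.toFinite _)] at this
  omega

def FiveOrPoorSix (G : SimpleGraph V) (x y : V) : Prop :=
  degN G x = 5 ∨ degN G x = 6 ∧ ∀ w, G.Adj x w → w ≠ y → degN G w ≤ 2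

lemma FiveOrPoorSix.mono {H : SimpleGraph V} (h : FiveOrPoorSix G x y) (hHG : H ≤ G)
    (hx : degN H x = degN G x) : FiveOrPoorSix H x y := by
  unfold FiveOrPoorSix at h ⊢
  rw [hx]
  exact h.imp_right fun ⟨h6, hs⟩ =>
    ⟨h6, fun w hw hwy => (degN_mono hHG w).trans (hs w (hHG hw) hwy)⟩

lemma degN_le_two_of_tpn_eq_one (h : tpn G x = 1) (hxy : G.Adj x y) (hy : 3 ≤ degN G y)
    {w : V} (hw : G.Adj x w) (hwy : w ≠ y) : degN G w ≤ 2 :=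
  degN_le_two_of_tpn_le (s := {y}) (by simpa using ⟨hxy, hy⟩) (by simp [h]) hw hwy

lemma fiveOrPoorSix_of_is5s_or_is6p (h : Is5s G x ∨ Is6p G x) (hxy : G.Adj x y)
    (hy : 3 ≤ degN G y) : FiveOrPoorSix G x y :=
  h.imp (·.1) fun h => ⟨h.1, fun _ hw hwy => degN_le_two_of_tpn_eq_one h.2 hxy hy hw hwy⟩

lemma degN_eq_five_and_forall_degN_le_two (h : Is5s G y ∨ Is6p G y) (hx : G.Adj y x)
    (hz : G.Adj y z) (hxz : x ≠ z) (hdx : 3 ≤ degN G x) (hdz : 3 ≤ degN G z) :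
    degN G y = 5 ∧ ∀ w, G.Adj y w → w ≠ x → w ≠ z → degN G w ≤ 2 := by
  have hs : ∀ w ∈ ({x, z} : Set V), G.Adj y w ∧ 3 ≤ degN G w := by
    simp [hx, hz, hdx, hdz]
  have h2 := Set.ncard_pair hxz ▸ ncard_le_tpn hs
  rcases h with ⟨h5, ht⟩ | ⟨-, ht⟩
  · exact ⟨h5, fun w hw hwx hwz =>
      degN_le_two_of_tpn_le hs (by rw [Set.ncard_pair hxz, ht]) hw (by simp [hwx, hwz])⟩
  · omega

end Poor

section Configurations

variable [Finite V] [DecidableEq V] {G : SimpleGraph V} {c : V → ℕ}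

lemma false_of_deleteEdges_of_fiveOrPoorSix (hnc : ¬ Colorable34 G) {p x : V} (hpx : G.Adj p x)
    (hp : degN G p = 5) (hps : ∀ w, G.Adj p w → w ≠ x → degN G w ≤ 2) (hx : FiveOrPoorSix G x p)
    (hc : IsColoring34 (G.deleteEdges {s(p, x)}) c) : False := by
  set H := G.deleteEdges {s(p, x)}
  have hHG : H ≤ G := G.deleteEdges_le _
  have hne : ∀ w, H.Adj p w ∨ H.Adj w p → w ≠ x := by
    rintro w h rfl
    simp [H, SimpleGraph.deleteEdges_adj] at h
  have hdp : degN H p + 1 = degN G p := degN_deleteEdges_add_one_left hpx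
  have hdx : degN H x + 1 = degN G x := degN_deleteEdges_add_one_right hpx
  have hp3 : 7 - c p < {w | H.Adj p w ∧ c w = 7 - c p}.ncard :=
    hc.lt_ncard_of_not_recolorable34 (not_recolorable34_left hnc hpx.ne hc) fun w hpw =>
      (degN_mono hHG w).trans (hps w (hHG hpw) (hne w (.inl hpw)))
  have hcp : c p = 4 := by
    have := ncard_adj_color_le_degN H c (7 - c p) p
    rcases hc.1 p with h | h
    · simp only [h] at hp3 this
      omega
    · exact h
  have hx4 : Saturated34 H c 4 x := by
    have : Saturated34 H c (c p) p ∨ Saturated34 H c (c x) x :=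
      saturated34_or_saturated34_of_deleteEdges hnc hc
    rcases this with h | h
    · have := ncard_adj_color_three_add_four (H := H) hc.1 p
      have h7 : 7 - c p = 3 := by rw [hcp]
      rw [h7] at hp3
      rw [hcp] at h
      have := h.2
      omega
    · rwa [← eq_of_isColoring34_deleteEdges hnc hc, hcp] at h
  have hx3 := ncard_adj_color_three_add_four (H := H) hc.1 x
  rw [hx4.2] at hx3
  have h7 : 7 - c x = 3 := by rw [hx4.1]
  obtain ⟨w, hxw, hw⟩ := hc.exists_saturated34_of_not_recolorable34
    (not_recolorable34_right hnc hpx.ne hc) (by rw [h7]; rcases hx with h | h <;> omega)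
  rw [h7] at hw
  rcases hx with h5 | ⟨h6, hxs⟩
  · have : 0 < {w | H.Adj x w ∧ c w = 3}.ncard :=
      (Set.ncard_pos (Set.toFinite _)).2 ⟨w, hxw, hw.1⟩
    omega
  · have := hw.le_degN_s11
    have := (degN_mono hHG w).trans (hxs w (hHG hxw) (fun h => hne x (.inr (h ▸ hxw)) rfl))
    omega

lemma Is5p.not_adj (hG : MinNonColorable34 G) {p x : V} (hp : Is5p G p)
    (hx : Is5s G x ∨ Is6p G x) : ¬ G.Adj p x := fun hpx => by
  obtain ⟨c, hc⟩ := hG.2.2 s(p, x) hpx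
  have hx3 : 3 ≤ degN G x := by rcases hx with ⟨h, -⟩ | ⟨h, -⟩ <;> omega
  exact false_of_deleteEdges_of_fiveOrPoorSix hG.1 hpx hp.1
    (fun _ hw hwx => degN_le_two_of_tpn_eq_one hp.2 hpx hx3 hw hwx)
    (fiveOrPoorSix_of_is5s_or_is6p hx hpx.symm (by rw [hp.1]; norm_num)) hc

lemma colors_of_deleteEdges_of_degN_le_two (hnc : ¬ Colorable34 G) {a p : V} (hap : G.Adj a p)
    (ha : degN G a ≤ 2) (hp : degN G p = 5) (hc : IsColoring34 (G.deleteEdges {s(a, p)}) c) :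
    c a = 3 ∧ Saturated34 (G.deleteEdges {s(a, p)}) c 3 p := by
  set H := G.deleteEdges {s(a, p)}
  have hcap : c a = c p := eq_of_isColoring34_deleteEdges hnc hc
  have hsat : Saturated34 H c (c p) p := by
    have : Saturated34 H c (c a) a ∨ Saturated34 H c (c p) p :=
      saturated34_or_saturated34_of_deleteEdges hnc hc
    refine this.resolve_left fun h => ?_
    have := h.le_degN_s11.trans ((degN_mono (G.deleteEdges_le _) a).trans ha)
    rcases hc.1 a with h' | h' <;> omega
  have hdp : degN H p + 1 = degN G p := degN_deleteEdges_add_one_right hap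
  have hcp : c p = 3 := by
    refine (hc.1 p).resolve_right fun hcp4 => not_recolorable34_right hnc hap.ne hc
      (hc.recolorable34_of_ncard_eq_zero ?_)
    have h7 : 7 - c p = 3 := by rw [hcp4]
    have := ncard_adj_color_three_add_four (H := H) hc.1 p
    rw [hcp4] at hsat
    have := hsat.2
    rw [h7]
    omega
  exact ⟨hcap.trans hcp, hcp ▸ hsat⟩

lemma colors_of_deleteEdges_of_degN_eq_two (hnc : ¬ Colorable34 G) {a p b z : V}
    (hap : G.Adj a p) (hpb : G.Adj p b) (hza : G.Adj z a) (hzp : z ≠ p) (hab : a ≠ b)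
    (ha : degN G a = 2) (hp : degN G p = 5) (hb : degN G b = 2)
    (hc : IsColoring34 (G.deleteEdges {s(a, p)}) c) :
    c a = 3 ∧ c b = 3 ∧ Saturated34 (G.deleteEdges {s(a, p)}) c 4 z := by
  set H := G.deleteEdges {s(a, p)}
  have hHG : H ≤ G := G.deleteEdges_le _
  obtain ⟨hca, hsat⟩ : c a = 3 ∧ Saturated34 H c 3 p :=
    colors_of_deleteEdges_of_degN_le_two hnc hap ha.le hp hc
  have hdp : degN H p + 1 = degN G p := degN_deleteEdges_add_one_right hap
  have hpart := ncard_adj_color_three_add_four (H := H) hc.1 p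
  have h7 : 7 - c p = 4 := by rw [hsat.1]
  obtain ⟨w, hpw, hw⟩ := hc.exists_saturated34_of_not_recolorable34
    (not_recolorable34_right hnc hap.ne hc) (by rw [h7]; have := hsat.2; omega)
  rw [h7] at hw
  refine ⟨hca, (hc.1 b).resolve_right fun hb4 => ?_, ?_⟩
  · have hHb : H.Adj p b := ((deleteEdges_adj_iff_of_ne hab.symm hpb.ne').2 hpb.symm).symm
    have hwb : w ≠ b := by
      rintro rfl
      have := hw.le_degN_s11.trans (degN_mono hHG w)
      omega
    have := Set.ncard_le_ncard (s := {w, b}) (t := {x | H.Adj p x ∧ c x = 4})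
      (by simp [Set.insert_subset_iff, hpw, hw.1, hHb, hb4]) (Set.toFinite _)
    rw [Set.ncard_pair hwb] at this
    have := hsat.2
    omega
  · have := saturated34_of_deleteEdges_of_adj_eq hnc hap.ne hc fun w =>
      eq_of_deleteEdges_adj_of_degN_eq_two ha hap hza.symm hzp.symm
    rwa [hca] at this

section ForbiddenColors

variable {H : SimpleGraph V} {a x y z : V}

lemma Saturated34.saturated34_three_of_forall_ne
    (hpend : ∀ c', IsColoring34 H c' → c' z ≠ c' a) (hc : IsColoring34 H c) (hca : c a = 3)
    (hz : Saturated34 H c 4 z) (hza : H.Adj z a) (ha : degN H a ≤ 2)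
    (hzdeg : FiveOrPoorSix H z y) : degN H z = 6 ∧ Saturated34 H c 3 y := by
  have h7 : 7 - c z = 3 := by rw [hz.1]
  have hnrec : ¬ Recolorable34 H c z := fun hrec => hpend _ hrec <| by
    rw [update_self, update_of_ne hza.ne', h7, hca]
  have hpart := ncard_adj_color_three_add_four (H := H) hc.1 z
  have hz4 := hz.2
  obtain ⟨w, hzw, hw⟩ := hc.exists_saturated34_of_not_recolorable34 hnrec
    (by rw [h7]; rcases hzdeg with h | h <;> omega)
  rw [h7] at hw
  have hwa : w ≠ a := by
    rintro rfl
    have := hw.le_degN_s11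
    omega
  rcases hzdeg with h5 | ⟨h6, hzs⟩
  · have := Set.ncard_le_ncard (s := {w, a}) (t := {x | H.Adj z x ∧ c x = 3})
      (by simp [Set.insert_subset_iff, hzw, hw.1, hza, hca]) (Set.toFinite _)
    rw [Set.ncard_pair hwa] at this
    omega
  · obtain rfl : w = y := by
      by_contra hwy
      have := hw.le_degN_s11
      have := hzs w hzw hwy
      omega
    exact ⟨h6, hw⟩

lemma Saturated34.saturated34_four_of_forall_ne
    (hpend : ∀ c', IsColoring34 H c' → c' z ≠ c' a) (hc : IsColoring34 H c) (hca : c a = 3)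
    (hz : Saturated34 H c 4 z) (hy : Saturated34 H c 3 y) (hyz : H.Adj y z) (hza : H.Adj z a)
    (ha : degN H a ≤ 2) (hzdeg : degN H z = 6) (hzs : ∀ w, H.Adj z w → w ≠ y → degN H w ≤ 2)
    (hydeg : degN H y = 5) (hys : ∀ w, H.Adj y w → w ≠ x → w ≠ z → degN H w ≤ 2) :
    Saturated34 H c 4 x := by
  by_contra hx
  have hay : a ≠ y := by
    rintro rfl
    omega
  have := ncard_adj_color_three_add_four (H := H) hc.1 z
  have := ncard_adj_color_three_add_four (H := H) hc.1 y
  have := hz.2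
  have := hy.2
  refine hpend _ (hc.swap hyz hy.1 hz.1 (by omega) (by omega) (fun w hyw hwz hw => ?_)
    (fun w hzw hwy hw => ?_)) ?_
  · have := hw.le_degN_s11
    by_cases hwx : w = x
    · exact hx (hwx ▸ hw)
    · have := hys w hyw hwx hwz
      omega
  · have := hw.le_degN_s11
    have := hzs w hzw hwy
    omega
  · simp [update_of_ne hay, hza.ne', hca]

lemma Saturated34.false_of_forall_ne {b : V}
    (hpend : ∀ c', IsColoring34 H c' → c' z ≠ c' a) (hc : IsColoring34 H c) (hca : c a = 3)
    (hz : Saturated34 H c 4 z) (hy : Saturated34 H c 3 y) (hx : Saturated34 H c 4 x)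
    (hcb : c b = 3) (hxb : H.Adj x b) (hxy : H.Adj x y) (hyz : H.Adj y z) (hza : H.Adj z a)
    (hnxz : ¬ H.Adj x z) (hxz : x ≠ z) (hby : b ≠ y) (ha : degN H a ≤ 2)
    (hxdeg : FiveOrPoorSix H x y) (hzdeg : degN H z = 6)
    (hzs : ∀ w, H.Adj z w → w ≠ y → degN H w ≤ 2) (hydeg : degN H y = 5) : False := by
  have := ncard_adj_color_three_add_four (H := H) hc.1 x
  have := ncard_adj_color_three_add_four (H := H) hc.1 y
  have := ncard_adj_color_three_add_four (H := H) hc.1 z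
  have := hx.2
  have := hy.2
  have := hz.2
  have h2 := Set.ncard_le_ncard (s := {b, y}) (t := {w | H.Adj x w ∧ c w = 3})
    (by simp [Set.insert_subset_iff, hxb, hcb, hxy, hy.1]) (Set.toFinite _)
  rw [Set.ncard_pair hby] at h2
  rcases hxdeg with h5 | ⟨h6, hxs⟩
  · omega
  have hy4 : ∀ w, H.Adj y w → c w = 4 → w = x ∨ w = z := fun w hyw hw =>
    Set.eq_or_eq_of_ncard_eq_two (s := {w | H.Adj y w ∧ c w = 4}) (by omega)
      ⟨hxy.symm, hx.1⟩ ⟨hyz, hz.1⟩ hxz ⟨hyw, hw⟩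
  have hax : a ≠ x := by
    rintro rfl
    omega
  have hay : a ≠ y := by
    rintro rfl
    omega
  refine hpend _ (hc.recolor_path hxy hyz hnxz hx.1 hy.1 hz.1 hy4 (by omega) (by omega) hxs hzs) ?_
  simp [hax, hay, hza.ne', hyz.ne', hca]

end ForbiddenColors

theorem false_of_deleteEdges_of_six_cycle (hnc : ¬ Colorable34 G) {p b x y z a : V}
    (hnd : [p, b, x, y, z, a].Nodup) (hpb : G.Adj p b) (hbx : G.Adj b x) (hxy : G.Adj x y)
    (hyz : G.Adj y z) (hza : G.Adj z a) (hap : G.Adj a p) (hnxz : ¬ G.Adj x z)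
    (hp : degN G p = 5) (hb : degN G b = 2) (ha : degN G a = 2) (hx : FiveOrPoorSix G x y)
    (hy : degN G y = 5) (hys : ∀ w, G.Adj y w → w ≠ x → w ≠ z → degN G w ≤ 2)
    (hz : FiveOrPoorSix G z y) (hc : IsColoring34 (G.deleteEdges {s(a, p)}) c) : False := by
  simp only [List.nodup_cons, List.mem_cons, List.not_mem_nil, List.nodup_nil, or_false,
    not_or] at hnd
  obtain ⟨⟨-, hpx, hpy, hpz, -⟩, ⟨-, hby, -, hba⟩, ⟨-, hxz, hxa⟩, ⟨-, hya⟩, -, -⟩ := hnd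
  set H := G.deleteEdges {s(a, p)}
  have hHG : H ≤ G := G.deleteEdges_le _
  have hadj : ∀ {v w}, G.Adj v w → v ≠ a → v ≠ p → H.Adj v w := fun h hva hvp =>
    (deleteEdges_adj_iff_of_ne hva hvp).2 h
  have hdeg : ∀ {v}, v ≠ a → v ≠ p → degN H v = degN G v := degN_deleteEdges_of_ne
  have hpend : ∀ c', IsColoring34 H c' → c' z ≠ c' a := fun c' hc' => by
    have := (saturated34_of_deleteEdges_of_adj_eq hnc hap.ne hc' fun w =>
      eq_of_deleteEdges_adj_of_degN_eq_two ha hap hza.symm hpz).1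
    rcases hc'.1 a with h | h <;> omega
  obtain ⟨hca, hcb, hz4⟩ :=
    colors_of_deleteEdges_of_degN_eq_two hnc hap hpb hza (Ne.symm hpz) (Ne.symm hba) ha hp hb hc
  have hza' : H.Adj z a := hadj hza hza.ne (Ne.symm hpz)
  have hdaH : degN H a ≤ 2 := (degN_mono hHG a).trans ha.le
  have hzH : FiveOrPoorSix H z y := hz.mono hHG (hdeg hza.ne (Ne.symm hpz))
  obtain ⟨hz6, hy3⟩ := hz4.saturated34_three_of_forall_ne hpend hc hca hza' hdaH hzH
  have hzs := (hzH.resolve_left (by omega)).2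
  have hyH : degN H y = 5 := (hdeg hya (Ne.symm hpy)).trans hy
  have hyz' : H.Adj y z := hadj hyz hya (Ne.symm hpy)
  have hx4 := hz4.saturated34_four_of_forall_ne hpend hc hca hy3 hyz' hza' hdaH hz6 hzs hyH
    fun w hyw hwx hwz => (degN_mono hHG w).trans (hys w (hHG hyw) hwx hwz)
  exact hz4.false_of_forall_ne hpend hc hca hy3 hx4 hcb (hadj hbx.symm hxa (Ne.symm hpx))
    (hadj hxy hxa (Ne.symm hpx)) hyz' hza' (fun h => hnxz (hHG h)) hxz hby hdaH
    (hx.mono hHG (hdeg hxa (Ne.symm hpx))) hz6 hzs hyH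

end Configurations

lemma Set.forall_or_of_ncard_le_add {α : Type*} {S : Set α} (hS : S.Finite) {P Q R : α → Prop}
    (hPQ : ∀ x, P x → ¬ Q x) (hPR : ∀ x, P x → ¬ R x) (hQR : ∀ x, Q x → ¬ R x)
    (h : S.ncard ≤ {x ∈ S | P x}.ncard + {x ∈ S | Q x}.ncard + {x ∈ S | R x}.ncard) :
    ∀ x ∈ S, P x ∨ Q x ∨ R x := by
  intro x hx
  by_contra! hn
  have hsub : {y ∈ S | P y} ∪ {y ∈ S | Q y} ∪ {y ∈ S | R y} ⊆ S \ {x} := by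
    rintro y ((⟨hy, hPy⟩ | ⟨hy, hQy⟩) | ⟨hy, hRy⟩) <;> refine ⟨hy, ?_⟩ <;> rintro rfl <;> simp_all
  have hPQ' : Disjoint {y ∈ S | P y} {y ∈ S | Q y} :=
    Set.disjoint_left.2 fun y hP hQ => hPQ y hP.2 hQ.2
  have hR : Disjoint ({y ∈ S | P y} ∪ {y ∈ S | Q y}) {y ∈ S | R y} :=
    Set.disjoint_union_left.2 ⟨Set.disjoint_left.2 fun y hP hR => hPR y hP.2 hR.2,
      Set.disjoint_left.2 fun y hQ hR => hQR y hQ.2 hR.2⟩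
  have hfin : ∀ T : α → Prop, {y ∈ S | T y}.Finite := fun T => hS.subset (Set.sep_subset _ _)
  have := Set.ncard_le_ncard hsub hS.sdiff
  rw [Set.ncard_union_eq hR ((hfin P).union (hfin Q)) (hfin R), Set.ncard_union_eq hPQ' (hfin P)
    (hfin Q), Set.ncard_sdiff_singleton_of_mem hx] at this
  have := (Set.ncard_pos hS).2 ⟨x, hx⟩
  omega

section SixCycle

variable [Finite V] [DecidableEq V] {G : SimpleGraph V}

theorem false_of_six_cycle_of_is5p (hG : MinNonColorable34 G) (hgirth : GirthAtLeast5 G)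
    {w : Fin 6 → V} (hw : Injective w) (hadj : ∀ i, G.Adj (w i) (w (i + 1))) (hp : Is5p G (w 0))
    (h2 : {x ∈ Set.range w | degN G x = 2}.ncard = 2)
    (h5p : {x ∈ Set.range w | Is5p G x}.ncard = 1)
    (hC : 2 < {x ∈ Set.range w | Is5s G x ∨ Is6p G x}.ncard) : False := by
  have hclass : ∀ i, degN G (w i) = 2 ∨ Is5p G (w i) ∨ Is5s G (w i) ∨ Is6p G (w i) := fun i =>
    Set.forall_or_of_ncard_le_add (P := fun v => degN G v = 2) (Q := Is5p G)
      (R := fun v => Is5s G v ∨ Is6p G v) (Set.toFinite _) (fun v h ⟨h', _⟩ => by omega)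
      (fun v h h' => by rcases h' with ⟨h', -⟩ | ⟨h', -⟩ <;> omega)
      (fun v ⟨h5, h1⟩ h' => by rcases h' with ⟨-, h'⟩ | ⟨h', -⟩ <;> omega)
      (by rw [Set.ncard_range_of_injective hw, Nat.card_eq_fintype_card, Fintype.card_fin]; omega) (w i) (Set.mem_range_self i)
  have hp_eq : ∀ i, Is5p G (w i) → i = 0 := fun i hi => by
    obtain ⟨q, hq⟩ := Set.ncard_eq_one.1 h5p
    have hi' : w i ∈ ({q} : Set V) := hq ▸ ⟨Set.mem_range_self i, hi⟩
    have h0 : w 0 ∈ ({q} : Set V) := hq ▸ ⟨Set.mem_range_self 0, hp⟩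
    exact hw (hi'.trans h0.symm)
  have hnbr : ∀ i, G.Adj (w 0) (w i) → degN G (w i) = 2 := fun i hi =>
    (hclass i).resolve_right fun h => h.elim (fun h5 => G.loopless.irrefl _ (hp_eq i h5 ▸ hi))
      fun h => hp.not_adj hG h hi
  have ha : degN G (w 5) = 2 := hnbr 5 (hadj 5).symm
  have hb : degN G (w 1) = 2 := hnbr 1 (hadj 0)
  have hfar : ∀ i, i ≠ 0 → i ≠ 1 → i ≠ 5 → Is5s G (w i) ∨ Is6p G (w i) := fun i h0 h1 h5 => by
    refine ((hclass i).resolve_left fun hi => ?_).resolve_left fun hi => h0 (hp_eq i hi)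
    exact ((Set.two_lt_ncard_iff (s := {x ∈ Set.range w | degN G x = 2})
      (Set.toFinite _)).2 ⟨w 1, w 5, w i,
      ⟨Set.mem_range_self 1, hb⟩, ⟨Set.mem_range_self 5, ha⟩, ⟨Set.mem_range_self i, hi⟩,
      hw.ne (by decide), hw.ne (Ne.symm h1), hw.ne (Ne.symm h5)⟩).ne' h2
  have hx := hfar 2 (by decide) (by decide) (by decide)
  have hy := hfar 3 (by decide) (by decide) (by decide)
  have hz := hfar 4 (by decide) (by decide) (by decide)
  have h3 : ∀ i, Is5s G (w i) ∨ Is6p G (w i) → 3 ≤ degN G (w i) := by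
    rintro i (⟨h, -⟩ | ⟨h, -⟩) <;> omega
  have hy' := degN_eq_five_and_forall_degN_le_two hy (hadj 2).symm (hadj 3) (hw.ne (by decide))
    (h3 2 hx) (h3 4 hz)
  obtain ⟨c, hc⟩ := hG.2.2 s(w 5, w 0) (hadj 5)
  exact false_of_deleteEdges_of_six_cycle hG.1 (by simpa [List.ofFn_succ] using List.nodup_ofFn.2 hw)
    (hadj 0) (hadj 1) (hadj 2) (hadj 3) (hadj 4) (hadj 5)
    (fun h => hgirth.1 _ _ _ (hadj 2) (hadj 3) h.symm) hp.1 hb ha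
    (fiveOrPoorSix_of_is5s_or_is6p hx (hadj 2) (h3 3 hy)) hy'.1 hy'.2
    (fiveOrPoorSix_of_is5s_or_is6p hz (hadj 3).symm (h3 3 hy)) hc

end SixCycle

end

/-- In a minimally non-(3,4)-colorable graph of girth at least 5, if
exactly two vertices of a 6-cycle have degree 2 and exactly one of them is a
5p-vertex, then at most two of its vertices are 5s-vertices or 6p-vertices. -/
theorem stmt_11 {V : Type*} [Fintype V] (G : SimpleGraph V)
    (hG : MinNonColorable34 G) (hgirth : GirthAtLeast5 G)
    (u1 u2 u3 u4 u5 u6 : V)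
    (hnd : ([u1, u2, u3, u4, u5, u6] : List V).Nodup)
    (a12 : G.Adj u1 u2) (a23 : G.Adj u2 u3) (a34 : G.Adj u3 u4)
    (a45 : G.Adj u4 u5) (a56 : G.Adj u5 u6) (a61 : G.Adj u6 u1)
    (h2 : {x ∈ ({u1, u2, u3, u4, u5, u6} : Set V) | degN G x = 2}.ncard = 2)
    (h5p : {x ∈ ({u1, u2, u3, u4, u5, u6} : Set V) | Is5p G x}.ncard = 1) :
    {x ∈ ({u1, u2, u3, u4, u5, u6} : Set V) | Is5s G x ∨ Is6p G x}.ncard ≤ 2 := by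
  classical
  set u : Fin 6 → V := ![u1, u2, u3, u4, u5, u6]
  have hu : Injective u := List.nodup_ofFn.mp hnd
  have hadj : ∀ i, G.Adj (u i) (u (i + 1)) := by
    intro i
    fin_cases i <;> assumption
  have hS : ({u1, u2, u3, u4, u5, u6} : Set V) = Set.range u := by
    simp only [u, Matrix.range_cons, Matrix.range_empty, Set.union_empty, Set.singleton_union]
  rw [hS] at h2 h5p ⊢
  by_contra! hC
  obtain ⟨_, ⟨k, rfl⟩, hk⟩ := Set.nonempty_of_ncard_ne_zero (s := {x ∈ Set.range u | Is5p G x})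
    (by omega)
  have hrange : Set.range (fun i => u (i + k)) = Set.range u :=
    (Equiv.addRight k).surjective.range_comp u
  refine false_of_six_cycle_of_is5p hG hgirth (w := fun i => u (i + k))
    (hu.comp (add_left_injective k)) (fun i => by simpa [add_right_comm] using hadj (i + k))
    (by simpa using hk) ?_ ?_ ?_ <;> rwa [hrange]
end
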